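/- arXiv:1304.4407 — 2 statements merged into one kernel-verified Lean document; each statement's English description precedes it below -/
import Mathlib

section
/- Fix x₀ ∈ ℝ^N, ε > 0, c > 0, and w ∈ ℝ^M with ‖w‖₂ ≤ ε; set y := Φ x₀ + w and λ := c ε. Suppose the source condition SC(x₀) holds with (η, α). Then every minimizer x⋆ of problem (P) satisfies ‖Φ x⋆ − Φ x₀‖₂ ≤ ε (2 + c‖η‖₂). -/
open RealInnerProductSpace

noncomputable section

abbrev Euc (n : ℕ) := EuclideanSpace ℝ (Fin n)

def proj {n : ℕ} (V : Submodule ℝ (Euc n)) : Euc n →L[ℝ] Euc n :=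
  V.subtypeL.comp (V.orthogonalProjection)

def dualNorm {n : ℕ} (A : Euc n → ℝ) (α : Euc n) : ℝ :=
  sSup {r : ℝ | ∃ v : Euc n, A v ≤ 1 ∧ r = ⟪α, v⟫}

def subdiff {n : ℕ} (f : Euc n → ℝ) (x : Euc n) : Set (Euc n) :=
  {g : Euc n | ∀ y : Euc n, f x + ⟪g, y - x⟫ ≤ f y}

def IsNorm {n : ℕ} (A : Euc n → ℝ) : Prop :=
  (∀ x, A x = 0 ↔ x = 0) ∧ (∀ (c : ℝ) (x : Euc n), A (c • x) = |c| * A x) ∧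
    (∀ x y, A (x + y) ≤ A x + A y)

def Decomposable {n : ℕ} (A : Euc n → ℝ) (u : Euc n) (T : Submodule ℝ (Euc n)) (e : Euc n) :
    Prop :=
  e ∈ T ∧
  subdiff A u = {α : Euc n | proj T α = e ∧ dualNorm A (proj Tᗮ α) ≤ 1} ∧
  ∀ z : Euc n, z ∈ Tᗮ →
    A z = sSup {r : ℝ | ∃ v ∈ (Tᗮ : Submodule ℝ (Euc n)), dualNorm A v ≤ 1 ∧ r = ⟪v, z⟫}

def obj {N M P : ℕ} (Φ : Euc N →L[ℝ] Euc M) (L : Euc P →L[ℝ] Euc N) (A : Euc P → ℝ)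
    (y : Euc M) (lam : ℝ) (x : Euc N) : ℝ :=
  (1/2) * ‖y - Φ x‖^2 + lam * A (ContinuousLinearMap.adjoint L x)

def SC {N M P : ℕ} (Φ : Euc N →L[ℝ] Euc M) (L : Euc P →L[ℝ] Euc N) (A : Euc P → ℝ)
    (x : Euc N) (η : Euc M) (α : Euc P) : Prop :=
  α ∈ subdiff A (ContinuousLinearMap.adjoint L x) ∧
  ContinuousLinearMap.adjoint Φ η = L α ∧
  L α ∈ subdiff (fun z => A (ContinuousLinearMap.adjoint L z)) x

def breg {n : ℕ} (A : Euc n → ℝ) (α u u₀ : Euc n) : ℝ :=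
  A u - A u₀ - ⟪α, u - u₀⟫

/-!
Testing the minimality of `xs` along the segment towards `x₀` and letting the step go to zero gives
the first-order condition `⟪y - Φ xs, Φ (x₀ - xs)⟫ ≤ λ (R x₀ - R xs)`. With `d := Φ xs - Φ x₀`
and `y - Φ xs = w - d` it reads `‖d‖² ≤ ⟪w, d⟫ + λ (R x₀ - R xs)`, and the source condition bounds
`R x₀ - R xs` by `-⟪η, d⟫`, so `‖d‖² ≤ (ε + λ ‖η‖) ‖d‖`.
-/

open Set Filter Topology

lemma le_of_forall_mem_Ioc_le_add_mul {a b c : ℝ} (h : ∀ t ∈ Ioc (0 : ℝ) 1, a ≤ b + t * c) :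
    a ≤ b := by
  have hlim : Tendsto (fun t : ℝ => b + t * c) (𝓝[>] 0) (𝓝 b) := by
    have hcont : Continuous fun t : ℝ => b + t * c := by fun_prop
    simpa using (hcont.tendsto 0).mono_left nhdsWithin_le_nhds
  exact ge_of_tendsto hlim (mem_of_superset (Ioc_mem_nhdsGT one_pos) h)

/-- First-order optimality: `Φ* (y - Φ xs)` is a subgradient of `g` at a minimizer `xs` of
`½ ‖y - Φ x‖² + g x`. -/
lemma inner_residual_le_sub_of_forall_le {E F : Type*} [AddCommGroup E] [Module ℝ E]
    [NormedAddCommGroup F] [InnerProductSpace ℝ F] (Φ : E →ₗ[ℝ] F) {g : E → ℝ}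
    (hg : ConvexOn ℝ univ g) (y : F) {xs : E}
    (hmin : ∀ x, 1 / 2 * ‖y - Φ xs‖ ^ 2 + g xs ≤ 1 / 2 * ‖y - Φ x‖ ^ 2 + g x) (x : E) :
    ⟪y - Φ xs, Φ (x - xs)⟫ ≤ g x - g xs := by
  set r := y - Φ xs
  set v := Φ (x - xs)
  refine le_of_forall_mem_Ioc_le_add_mul (c := ‖v‖ ^ 2 / 2) fun t ⟨ht0, ht1⟩ => ?_
  have hconv : g ((1 - t) • xs + t • x) ≤ (1 - t) * g xs + t * g x :=
    hg.2 (mem_univ _) (mem_univ _) (by linarith) ht0.le (by ring)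
  have hres : y - Φ ((1 - t) • xs + t • x) = r - t • v := by
    simp only [r, v, map_add, map_sub, map_smul]
    module
  have hexp : ‖r - t • v‖ ^ 2 = ‖r‖ ^ 2 - 2 * (t * ⟪r, v⟫) + t ^ 2 * ‖v‖ ^ 2 := by
    rw [norm_sub_sq_real, real_inner_smul_right, norm_smul, Real.norm_of_nonneg ht0.le, mul_pow]
  have hstep := hmin ((1 - t) • xs + t • x)
  rw [hres, hexp] at hstep
  have hscaled : t * ⟪r, v⟫ ≤ t * (g x - g xs + t * (‖v‖ ^ 2 / 2)) := by nlinarith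
  exact le_of_mul_le_mul_left hscaled ht0

lemma IsNorm.convexOn {n : ℕ} {A : Euc n → ℝ} (hA : IsNorm A) : ConvexOn ℝ univ A := by
  refine ⟨convex_univ, fun u _ v _ a b ha hb _ => ?_⟩
  calc A (a • u + b • v) ≤ A (a • u) + A (b • v) := hA.2.2 _ _
    _ = a • A u + b • A v := by
      rw [hA.2.1, hA.2.1, abs_of_nonneg ha, abs_of_nonneg hb, smul_eq_mul, smul_eq_mul]

lemma SC.inner_map_sub_le {N M P : ℕ} {Φ : Euc N →L[ℝ] Euc M} {L : Euc P →L[ℝ] Euc N}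
    {A : Euc P → ℝ} {x₀ : Euc N} {η : Euc M} {α : Euc P} (hSC : SC Φ L A x₀ η α) (x : Euc N) :
    ⟪η, Φ x - Φ x₀⟫ ≤ A (L.adjoint x) - A (L.adjoint x₀) := by
  obtain ⟨-, hadj, hsub⟩ := hSC
  have h := hsub x
  rw [← hadj, ContinuousLinearMap.adjoint_inner_left, map_sub] at h
  linarith

theorem stmt4_general {N M P : ℕ} (Φ : Euc N →L[ℝ] Euc M) (L : Euc P →L[ℝ] Euc N)
    (A : Euc P → ℝ) (hA : IsNorm A) (x₀ : Euc N)
    (ε c : ℝ) (hc : 0 < c) (w : Euc M) (hw : ‖w‖ ≤ ε)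
    (η : Euc M) (α : Euc P) (hSC : SC Φ L A x₀ η α)
    (xs : Euc N)
    (hmin : ∀ x, obj Φ L A (Φ x₀ + w) (c * ε) xs ≤ obj Φ L A (Φ x₀ + w) (c * ε) x) :
    ‖Φ xs - Φ x₀‖ ≤ ε * (2 + c * ‖η‖) := by
  have hε : 0 ≤ ε := (norm_nonneg w).trans hw
  have hlam : 0 ≤ c * ε := mul_nonneg hc.le hε
  have hR : ConvexOn ℝ univ fun x => (c * ε) * A (L.adjoint x) :=
    (hA.convexOn.comp_linearMap L.adjoint.toLinearMap).smul hlam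
  have hopt := inner_residual_le_sub_of_forall_le Φ.toLinearMap hR (Φ x₀ + w) hmin x₀
  set d := Φ xs - Φ x₀
  have hres : Φ x₀ + w - Φ xs = w - d := by simp only [d]; abel
  have hdir : Φ (x₀ - xs) = -d := by simp only [d, map_sub, neg_sub]
  simp only [ContinuousLinearMap.coe_coe, hres, hdir, inner_neg_right, inner_sub_left,
    real_inner_self_eq_norm_sq] at hopt
  have hsource := hSC.inner_map_sub_le xs
  have hwd : ⟪w, d⟫ ≤ ‖w‖ * ‖d‖ := real_inner_le_norm w d
  have hηd : -⟪η, d⟫ ≤ ‖η‖ * ‖d‖ := by linarith [abs_real_inner_le_norm η d, neg_abs_le ⟪η, d⟫]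
  have hsq : ‖d‖ ^ 2 ≤ (ε + c * ε * ‖η‖) * ‖d‖ := by
    nlinarith [mul_le_mul_of_nonneg_left hηd hlam, mul_le_mul_of_nonneg_right hw (norm_nonneg d)]
  nlinarith [norm_nonneg d, norm_nonneg η, mul_nonneg hlam (norm_nonneg η)]

theorem stmt4 {N M P : ℕ} (Φ : Euc N →L[ℝ] Euc M) (L : Euc P →L[ℝ] Euc N)
    (A : Euc P → ℝ) (hA : IsNorm A) (x₀ : Euc N)
    (ε c : ℝ) (hε : 0 < ε) (hc : 0 < c) (w : Euc M) (hw : ‖w‖ ≤ ε)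
    (η : Euc M) (α : Euc P) (hSC : SC Φ L A x₀ η α)
    (xs : Euc N)
    (hmin : ∀ x, obj Φ L A (Φ x₀ + w) (c * ε) xs ≤ obj Φ L A (Φ x₀ + w) (c * ε) x) :
    ‖Φ xs - Φ x₀‖ ≤ ε * (2 + c * ‖η‖) :=
  stmt4_general Φ L A hA x₀ ε c hc w hw η α hSC xs hmin
end
end

section
/- Fix x₀ ∈ ℝ^N and suppose the norm A is decomposable at L* x₀ with data (T₀, e₀); set S₀ := T₀⊥. Let α ∈ ∂A(L* x₀) satisfy A*(P_{S₀} α) < 1, and let C_A > 0 satisfy A(z) ≥ C_A ‖z‖₂ for all z ∈ ℝ^P. Then for every x⋆ ∈ ℝ^N, ‖L_{S₀}*(x⋆ − x₀)‖₂ ≤ D_α(L* x⋆, L* x₀) / (C_A (1 − A*(P_{S₀} α))). -/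
/-!
Put `u = L* x⋆`, `u₀ = L* x₀`, `S₀ = T₀ᗮ` and `w = P_{S₀} (u - u₀)`. By (i), every `e₀ + v` with
`v ∈ S₀`, `A* v ≤ 1` is a subgradient at `u₀`, while `α = e₀ + P_{S₀} α`; subtracting the two
subgradient inequalities gives `⟪v, w⟫ ≤ D_α(u, u₀) + ⟪P_{S₀} α, w⟫`. Taking the supremum over `v`
via (ii) yields `A w ≤ D_α(u, u₀) + A*(P_{S₀} α) A w`, and `C_A ‖w‖ ≤ A w` finishes the proof.
-/

open RealInnerProductSpace

noncomputable section

theorem proj_eq_starProjection {n : ℕ} (V : Submodule ℝ (Euc n)) : proj V = V.starProjection :=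
  rfl

theorem proj_mem {n : ℕ} (V : Submodule ℝ (Euc n)) (x : Euc n) : proj V x ∈ V :=
  V.starProjection_apply_mem x

section DualNorm

variable {n : ℕ} (A : Euc n → ℝ)

theorem dualNorm_zero : dualNorm A 0 = 0 := by
  by_cases h : ∃ v : Euc n, A v ≤ 1 <;> simp [dualNorm, h]

variable {A} {CA : ℝ} (hCA : 0 < CA) (hCAbd : ∀ z : Euc n, CA * ‖z‖ ≤ A z)
include hCA hCAbd

theorem bddAbove_inner_of_le_one (γ : Euc n) :
    BddAbove {r : ℝ | ∃ v : Euc n, A v ≤ 1 ∧ r = ⟪γ, v⟫} := by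
  refine ⟨‖γ‖ / CA, ?_⟩
  rintro r ⟨v, hv, rfl⟩
  have hnorm : ‖v‖ ≤ 1 / CA := by
    rw [le_div_iff₀ hCA]
    linarith [hCAbd v]
  calc ⟪γ, v⟫ ≤ ‖γ‖ * ‖v‖ := real_inner_le_norm _ _
    _ ≤ ‖γ‖ * (1 / CA) := by gcongr
    _ = ‖γ‖ / CA := by ring

theorem inner_le_dualNorm_mul (hhom : ∀ (c : ℝ) (x : Euc n), A (c • x) = |c| * A x)
    (γ v : Euc n) : ⟪γ, v⟫ ≤ dualNorm A γ * A v := by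
  have hA0 : A 0 = 0 := by simpa using hhom 0 0
  rcases eq_or_ne v 0 with rfl | hv
  · simp [hA0]
  have hAv : 0 < A v := (mul_pos hCA (norm_pos_iff.mpr hv)).trans_le (hCAbd v)
  have hunit : A ((A v)⁻¹ • v) ≤ 1 := by
    rw [hhom, abs_of_pos (inv_pos.mpr hAv), inv_mul_cancel₀ hAv.ne']
  have hle : ⟪γ, (A v)⁻¹ • v⟫ ≤ dualNorm A γ :=
    le_csSup (bddAbove_inner_of_le_one hCA hCAbd γ) ⟨_, hunit, rfl⟩
  rw [real_inner_smul_right, inv_mul_le_iff₀ hAv] at hle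
  linarith

end DualNorm

namespace Decomposable

variable {n : ℕ} {A : Euc n → ℝ} {u₀ e : Euc n} {T : Submodule ℝ (Euc n)}

theorem proj_eq_of_mem_subdiff (hdec : Decomposable A u₀ T e) {α : Euc n}
    (hα : α ∈ subdiff A u₀) : proj T α = e := by
  rw [hdec.2.1] at hα
  exact hα.1

theorem add_mem_subdiff (hdec : Decomposable A u₀ T e) {v : Euc n} (hvT : v ∈ Tᗮ)
    (hv : dualNorm A v ≤ 1) : e + v ∈ subdiff A u₀ := by
  have hTv : proj T v = 0 := (T.starProjection_apply_eq_zero_iff).mpr hvT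
  have hTe : proj T e = e := Submodule.starProjection_eq_self_iff.mpr hdec.1
  have hSv : proj Tᗮ v = v := Submodule.starProjection_eq_self_iff.mpr hvT
  have hSe : proj Tᗮ e = 0 :=
    (Tᗮ.starProjection_apply_eq_zero_iff).mpr (T.le_orthogonal_orthogonal hdec.1)
  rw [hdec.2.1]
  refine ⟨?_, ?_⟩
  · rw [map_add, hTe, hTv, add_zero]
  · rwa [map_add, hSe, hSv, zero_add]

theorem inner_le_breg_add (hdec : Decomposable A u₀ T e) {α : Euc n} (hα : α ∈ subdiff A u₀)
    (u : Euc n) {v : Euc n} (hvT : v ∈ Tᗮ) (hv : dualNorm A v ≤ 1) :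
    ⟪v, proj Tᗮ (u - u₀)⟫ ≤ breg A α u u₀ + ⟪proj Tᗮ α, proj Tᗮ (u - u₀)⟫ := by
  have hsub := hdec.add_mem_subdiff hvT hv u
  have hα_split : α = e + proj Tᗮ α := by
    rw [← hdec.proj_eq_of_mem_subdiff hα, proj_eq_starProjection, proj_eq_starProjection,
      Submodule.starProjection_add_starProjection_orthogonal]
  have hproj : ∀ w ∈ Tᗮ, ⟪w, proj Tᗮ (u - u₀)⟫ = ⟪w, u - u₀⟫ := fun w hw => by
    rw [proj_eq_starProjection, ← Submodule.inner_starProjection_left_eq_right,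
      Submodule.starProjection_eq_self_iff.mpr hw]
  have hαu : ⟪α, u - u₀⟫ = ⟪e, u - u₀⟫ + ⟪proj Tᗮ α, u - u₀⟫ := by
    conv_lhs => rw [hα_split]
    exact inner_add_left _ _ _
  rw [inner_add_left] at hsub
  rw [hproj v hvT, hproj _ (proj_mem Tᗮ α), breg]
  linarith

theorem apply_proj_orthogonal_le (hdec : Decomposable A u₀ T e) {α : Euc n}
    (hα : α ∈ subdiff A u₀) (u : Euc n) :
    A (proj Tᗮ (u - u₀)) ≤ breg A α u u₀ + ⟪proj Tᗮ α, proj Tᗮ (u - u₀)⟫ := by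
  rw [hdec.2.2 _ (proj_mem Tᗮ _)]
  refine csSup_le ⟨0, 0, Tᗮ.zero_mem, by simp [dualNorm_zero], by simp⟩ ?_
  rintro r ⟨v, hvT, hv, rfl⟩
  exact hdec.inner_le_breg_add hα u hvT hv

end Decomposable

theorem stmt5 {N P : ℕ} (L : Euc P →L[ℝ] Euc N)
    (A : Euc P → ℝ) (hA : IsNorm A) (x₀ : Euc N)
    (T₀ : Submodule ℝ (Euc P)) (e₀ : Euc P)
    (hdec : Decomposable A (ContinuousLinearMap.adjoint L x₀) T₀ e₀)
    (α : Euc P) (hα : α ∈ subdiff A (ContinuousLinearMap.adjoint L x₀))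
    (hsat : dualNorm A (proj T₀ᗮ α) < 1)
    (CA : ℝ) (hCA : 0 < CA) (hCAbd : ∀ z : Euc P, CA * ‖z‖ ≤ A z)
    (xs : Euc N) :
    ‖proj T₀ᗮ (ContinuousLinearMap.adjoint L (xs - x₀))‖ ≤
      breg A α (ContinuousLinearMap.adjoint L xs) (ContinuousLinearMap.adjoint L x₀) /
        (CA * (1 - dualNorm A (proj T₀ᗮ α))) := by
  set w := proj T₀ᗮ (ContinuousLinearMap.adjoint L (xs - x₀))
  set a := dualNorm A (proj T₀ᗮ α)
  set D := breg A α (ContinuousLinearMap.adjoint L xs) (ContinuousLinearMap.adjoint L x₀)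
  have hAw : A w ≤ D + ⟪proj T₀ᗮ α, w⟫ := by
    simpa only [w, map_sub] using hdec.apply_proj_orthogonal_le hα (ContinuousLinearMap.adjoint L xs)
  have hinner : ⟪proj T₀ᗮ α, w⟫ ≤ a * A w := inner_le_dualNorm_mul hCA hCAbd hA.2.1 _ _
  have hgap : 0 < 1 - a := sub_pos.mpr hsat
  rw [le_div_iff₀ (mul_pos hCA hgap)]
  calc ‖w‖ * (CA * (1 - a)) = (CA * ‖w‖) * (1 - a) := by ring
    _ ≤ A w * (1 - a) := mul_le_mul_of_nonneg_right (hCAbd w) hgap.le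
    _ ≤ D := by linarith
end
end
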